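/- Let $\phi:\mathbb{T}^{d}\to\mathbb{T}^{d}$ be a smooth map and suppose that for some $\lambda>0$ and $C_0>0$ one has $\sup_x|\partial(\phi^n)(x)|\le C_0 e^{\lambda n}$ for all $n\in\mathbb{N}$, where $\phi^n$ denotes the $n$-fold composition. Then there exists $C>0$ (depending only on $C_0$, $\lambda$, $d$, and $\|\phi\|_{C^2}$) such that for every $a\in C^2(\mathbb{T}^d)$, every $n\in\mathbb{N}$, every second-order partial derivative $\partial^{\alpha}$ with $|\alpha|=2$, and every $x$: $|\partial^{\alpha}(a\circ\phi^n)(x)|\le C\|a\|_{C^2}e^{2\lambda n}$. -/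

import Mathlib

open ContinuousLinearMap

section aux

variable {X E F G H' : Type*} [NormedAddCommGroup X] [NormedSpace ℝ X]
  [NormedAddCommGroup E] [NormedSpace ℝ E] [NormedAddCommGroup F] [NormedSpace ℝ F]
  [NormedAddCommGroup G] [NormedSpace ℝ G] [NormedAddCommGroup H'] [NormedSpace ℝ H']

theorem stmt6_compL_norm (L : F →L[ℝ] G) : ‖compL ℝ E F G L‖ ≤ ‖L‖ :=
  opNorm_le_bound _ (norm_nonneg L) fun _ => opNorm_comp_le _ _

theorem stmt6_flip_norm (L : E →L[ℝ] F) : ‖(compL ℝ E F G).flip L‖ ≤ ‖L‖ := by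
  refine opNorm_le_bound _ (norm_nonneg L) fun M => ?_
  simp only [flip_apply, compL_apply]
  exact le_trans (opNorm_comp_le _ _) (le_of_eq (mul_comm _ _))

theorem stmt6_comp_comp (L : G →L[ℝ] H') (M : F →L[ℝ] G) (T : X →L[ℝ] (E →L[ℝ] F)) :
    (compL ℝ E G H' L).comp ((compL ℝ E F G M).comp T)
      = (compL ℝ E F H' (L.comp M)).comp T := by
  ext v w; simp

theorem stmt6_comp_id (T : X →L[ℝ] (E →L[ℝ] F)) :
    (compL ℝ E F F (ContinuousLinearMap.id ℝ F)).comp T = T := by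
  ext v w; simp

theorem stmt6_iter_smooth (φ : E → E) (hφ : ContDiff ℝ (⊤ : ℕ∞) φ) (n : ℕ) : ContDiff ℝ (⊤ : ℕ∞) (φ^[n]) := by
  induction n with
  | zero => simpa using contDiff_id
  | succ n ih => rw [Function.iterate_succ']; exact hφ.comp ih

theorem stmt6_norm2 (f : E → F) (x : E) :
    ‖iteratedFDeriv ℝ 2 f x‖ = ‖fderiv ℝ (fderiv ℝ f) x‖ := by
  rw [← norm_iteratedFDeriv_fderiv, ← norm_iteratedFDeriv_fderiv, norm_iteratedFDeriv_zero]

theorem stmt6_norm1 (f : E → F) (x : E) :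
    ‖iteratedFDeriv ℝ 1 f x‖ = ‖fderiv ℝ f x‖ := by
  rw [← norm_iteratedFDeriv_fderiv, norm_iteratedFDeriv_zero]

end aux

set_option maxHeartbeats 1000000 in
/-- Second-derivative bound for a function composed with iterates of a smooth torus map:
if the Jacobians of the iterates satisfy `‖D(φⁿ)‖ ≤ C₀ e^{λn}`, then
`‖D²(a ∘ φⁿ)‖ ≤ C ‖a‖_{C²} e^{2λn}` with `C` independent of `a` and `n`. -/
theorem stmt6 (d : ℕ) (hd : 0 < d) (φ : (Fin d → ℝ) → (Fin d → ℝ))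
    (hφ : ContDiff ℝ (⊤ : ℕ∞) φ)
    (hper : ∀ (x : Fin d → ℝ) (v : Fin d → ℤ), ∃ w : Fin d → ℤ,
      φ (x + fun i => (v i : ℝ)) = φ x + fun i => (w i : ℝ))
    (lam C₀ : ℝ) (hlam : 0 < lam) (hC₀ : 0 < C₀)
    (hJac : ∀ (n : ℕ) (x : Fin d → ℝ), ‖fderiv ℝ (φ^[n]) x‖ ≤ C₀ * Real.exp (lam * n))
    (Cφ : ℝ) (hφC2 : ∀ x, ‖iteratedFDeriv ℝ 2 φ x‖ ≤ Cφ) :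
    ∃ C : ℝ, 0 < C ∧ ∀ (a : (Fin d → ℝ) → ℂ), ContDiff ℝ 2 a →
      (∀ (x : Fin d → ℝ) (v : Fin d → ℤ), a (x + fun i => (v i : ℝ)) = a x) →
      ∀ Ca : ℝ, (∀ i ≤ 2, ∀ x, ‖iteratedFDeriv ℝ i a x‖ ≤ Ca) →
      ∀ (n : ℕ) (x : Fin d → ℝ),
        ‖iteratedFDeriv ℝ 2 (a ∘ φ^[n]) x‖ ≤ C * Ca * Real.exp (2 * lam * n) := by
  classical
  have hCφ0 : 0 ≤ Cφ := le_trans (norm_nonneg _) (hφC2 0)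
  have ht1 : 1 < Real.exp lam := Real.one_lt_exp_iff.mpr hlam
  set K : ℝ := Cφ * C₀ ^ 3 / (Real.exp lam - 1) with hKdef
  have hK0 : 0 ≤ K := div_nonneg (by positivity) (by linarith)
  have hKeq : K * (Real.exp lam - 1) = Cφ * C₀ ^ 3 := by
    have hne : Real.exp lam - 1 ≠ 0 := by linarith
    rw [hKdef, div_mul_cancel₀ _ hne]
  -- smoothness of iterates
  have hit : ∀ n, ContDiff ℝ (⊤ : ℕ∞) (φ^[n]) := stmt6_iter_smooth φ hφ
  have hdiff : ∀ n (x : Fin d → ℝ), DifferentiableAt ℝ (φ^[n]) x :=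
    fun n x => ((hit n).differentiable (by simp)).differentiableAt
  have hφdiff : ∀ x : Fin d → ℝ, DifferentiableAt ℝ φ x :=
    fun x => (hφ.differentiable (by simp)).differentiableAt
  have hfddiff : ∀ n (x : Fin d → ℝ), DifferentiableAt ℝ (fderiv ℝ (φ^[n])) x := fun n x =>
    (((hit n).fderiv_right (m := (⊤ : ℕ∞)) (by simp)).differentiable (by simp)).differentiableAt
  have hφfddiff : ∀ x : Fin d → ℝ, DifferentiableAt ℝ (fderiv ℝ φ) x := fun x =>
    ((hφ.fderiv_right (m := (⊤ : ℕ∞)) (by simp)).differentiable (by simp)).differentiableAt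
  -- one-step chain rule for first derivatives
  have hiter : ∀ (m : ℕ) (y : Fin d → ℝ),
      fderiv ℝ (φ^[m + 1]) y = (fderiv ℝ (φ^[m]) (φ y)).comp (fderiv ℝ φ y) := by
    intro m y
    rw [Function.iterate_succ]
    exact fderiv_comp y (hdiff m (φ y)) (hφdiff y)
  have hφ2 : ∀ y : Fin d → ℝ, ‖fderiv ℝ (fderiv ℝ φ) y‖ ≤ Cφ := by
    intro y; rw [← stmt6_norm2]; exact hφC2 y
  -- key inductive estimate
  have key : ∀ (n m : ℕ) (x : Fin d → ℝ),
      ‖(compL ℝ (Fin d → ℝ) (Fin d → ℝ) (Fin d → ℝ) (fderiv ℝ (φ^[m]) (φ^[n] x))).comp (fderiv ℝ (fderiv ℝ (φ^[n])) x)‖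
        ≤ K * Real.exp (lam * m) * Real.exp (2 * lam * n) := by
    intro n
    induction n with
    | zero =>
      intro m x
      have h0 : fderiv ℝ (φ^[0] : (Fin d → ℝ) → (Fin d → ℝ)) = fun _ => ContinuousLinearMap.id ℝ (Fin d → ℝ) := by
        funext y
        rw [Function.iterate_zero]
        exact fderiv_id
      rw [h0, fderiv_fun_const]
      simp only [Pi.zero_apply, ContinuousLinearMap.comp_zero, norm_zero]
      positivity
    | succ n IH =>
      intro m x
      have hc : DifferentiableAt ℝ (fun y : Fin d → ℝ => fderiv ℝ φ (φ^[n] y)) x :=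
        (hφfddiff (φ^[n] x)).comp x (hdiff n x)
      have hdd : DifferentiableAt ℝ (fun y : Fin d → ℝ => fderiv ℝ (φ^[n]) y) x := hfddiff n x
      have hrw : fderiv ℝ (φ^[n + 1] : (Fin d → ℝ) → (Fin d → ℝ))
          = fun y => ((fun z : Fin d → ℝ => fderiv ℝ φ (φ^[n] z)) y).comp (fderiv ℝ (φ^[n]) y) := by
        funext y
        rw [Function.iterate_succ']
        exact fderiv_comp y (hφdiff (φ^[n] y)) (hdiff n y)
      have hprod : fderiv ℝ (fderiv ℝ (φ^[n + 1] : (Fin d → ℝ) → (Fin d → ℝ))) x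
          = (compL ℝ (Fin d → ℝ) (Fin d → ℝ) (Fin d → ℝ) (fderiv ℝ φ (φ^[n] x))).comp (fderiv ℝ (fderiv ℝ (φ^[n])) x)
            + ((compL ℝ (Fin d → ℝ) (Fin d → ℝ) (Fin d → ℝ)).flip (fderiv ℝ (φ^[n]) x)).comp
                (fderiv ℝ (fun y : Fin d → ℝ => fderiv ℝ φ (φ^[n] y)) x) := by
        rw [hrw]
        exact fderiv_clm_comp hc hdd
      have hcder : fderiv ℝ (fun y : Fin d → ℝ => fderiv ℝ φ (φ^[n] y)) x
          = (fderiv ℝ (fderiv ℝ φ) (φ^[n] x)).comp (fderiv ℝ (φ^[n]) x) :=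
        fderiv_comp x (hφfddiff (φ^[n] x)) (hdiff n x)
      set L : (Fin d → ℝ) →L[ℝ] (Fin d → ℝ) := fderiv ℝ (φ^[m]) (φ^[n + 1] x) with hLdef
      rw [hprod, ContinuousLinearMap.comp_add]
      refine le_trans (norm_add_le _ _) ?_
      -- first term: reduces to IH with m+1
      have hT1 : (compL ℝ (Fin d → ℝ) (Fin d → ℝ) (Fin d → ℝ) L).comp
            ((compL ℝ (Fin d → ℝ) (Fin d → ℝ) (Fin d → ℝ) (fderiv ℝ φ (φ^[n] x))).comp (fderiv ℝ (fderiv ℝ (φ^[n])) x))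
          = (compL ℝ (Fin d → ℝ) (Fin d → ℝ) (Fin d → ℝ) (fderiv ℝ (φ^[m + 1]) (φ^[n] x))).comp
              (fderiv ℝ (fderiv ℝ (φ^[n])) x) := by
        rw [stmt6_comp_comp]
        congr 2
        rw [hiter m (φ^[n] x), hLdef, Function.iterate_succ_apply']
      have h1 : ‖(compL ℝ (Fin d → ℝ) (Fin d → ℝ) (Fin d → ℝ) L).comp
            ((compL ℝ (Fin d → ℝ) (Fin d → ℝ) (Fin d → ℝ) (fderiv ℝ φ (φ^[n] x))).comp (fderiv ℝ (fderiv ℝ (φ^[n])) x))‖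
          ≤ K * Real.exp (lam * (m + 1)) * Real.exp (2 * lam * n) := by
        rw [hT1]
        have := IH (m + 1) x
        convert this using 3
        push_cast; ring
      -- second term
      have h2 : ‖(compL ℝ (Fin d → ℝ) (Fin d → ℝ) (Fin d → ℝ) L).comp
            (((compL ℝ (Fin d → ℝ) (Fin d → ℝ) (Fin d → ℝ)).flip (fderiv ℝ (φ^[n]) x)).comp
              (fderiv ℝ (fun y : Fin d → ℝ => fderiv ℝ φ (φ^[n] y)) x))‖
          ≤ (C₀ * Real.exp (lam * m)) * ((C₀ * Real.exp (lam * n))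
              * (Cφ * (C₀ * Real.exp (lam * n)))) := by
        refine le_trans (opNorm_comp_le _ _) ?_
        have hL : ‖compL ℝ (Fin d → ℝ) (Fin d → ℝ) (Fin d → ℝ) L‖ ≤ C₀ * Real.exp (lam * m) :=
          le_trans (stmt6_compL_norm L) (hJac m _)
        refine mul_le_mul hL ?_ (norm_nonneg _) (by positivity)
        refine le_trans (opNorm_comp_le _ _) ?_
        refine mul_le_mul (le_trans (stmt6_flip_norm _) (by
            simpa using hJac n x)) ?_ (norm_nonneg _) (by positivity)
        rw [hcder]
        refine le_trans (opNorm_comp_le _ _) ?_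
        exact mul_le_mul (hφ2 _) (hJac n x) (norm_nonneg _) hCφ0
      refine le_trans (add_le_add h1 h2) ?_
      -- arithmetic
      have e1 : Real.exp (lam * (m + 1)) = Real.exp (lam * m) * Real.exp lam := by
        rw [← Real.exp_add]; ring_nf
      have e2 : Real.exp (2 * lam * ((n : ℝ) + 1))
          = Real.exp (2 * lam * n) * (Real.exp lam * Real.exp lam) := by
        rw [← Real.exp_add, ← Real.exp_add]; ring_nf
      have e3 : Real.exp (lam * n) * Real.exp (lam * n) = Real.exp (2 * lam * n) := by
        rw [← Real.exp_add]; ring_nf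
      have hu : (0:ℝ) < Real.exp (lam * m) := Real.exp_pos _
      have hv : (0:ℝ) < Real.exp (2 * lam * n) := Real.exp_pos _
      have hcast : ((n + 1 : ℕ) : ℝ) = (n : ℝ) + 1 := by push_cast; ring
      rw [hcast, e1, e2]
      have hCC : (0:ℝ) ≤ Cφ * C₀ ^ 3 := by positivity
      have hstep : K * Real.exp lam + Cφ * C₀ ^ 3
          ≤ K * (Real.exp lam * Real.exp lam) := by nlinarith
      calc K * (Real.exp (lam * m) * Real.exp lam) * Real.exp (2 * lam * n)
            + C₀ * Real.exp (lam * m) * (C₀ * Real.exp (lam * n)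
                * (Cφ * (C₀ * Real.exp (lam * n))))
          = (K * Real.exp lam + Cφ * C₀ ^ 3)
              * (Real.exp (lam * m) * Real.exp (2 * lam * n)) := by rw [← e3]; ring
        _ ≤ (K * (Real.exp lam * Real.exp lam))
              * (Real.exp (lam * m) * Real.exp (2 * lam * n)) :=
            mul_le_mul_of_nonneg_right hstep (le_of_lt (mul_pos hu hv))
        _ = K * Real.exp (lam * m)
              * (Real.exp (2 * lam * n) * (Real.exp lam * Real.exp lam)) := by ring
  -- bound on second derivative of iterates
  have keyn : ∀ (n : ℕ) (x : Fin d → ℝ),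
      ‖fderiv ℝ (fderiv ℝ (φ^[n])) x‖ ≤ K * Real.exp (2 * lam * n) := by
    intro n x
    have h := key n 0 x
    have h0 : fderiv ℝ (φ^[0] : (Fin d → ℝ) → (Fin d → ℝ)) (φ^[n] x) = ContinuousLinearMap.id ℝ (Fin d → ℝ) := by
      rw [Function.iterate_zero]; exact fderiv_id
    rw [h0, stmt6_comp_id] at h
    simpa using h
  refine ⟨C₀ ^ 2 + K + 1, by positivity, ?_⟩
  intro a ha hpera Ca hCa n x
  have hCa0 : 0 ≤ Ca := le_trans (norm_nonneg _) (hCa 0 (by norm_num) x)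
  have hadiff : ∀ y : Fin d → ℝ, DifferentiableAt ℝ a y :=
    fun y => (ha.differentiable (by norm_num)).differentiableAt
  have hafd : ContDiff ℝ 1 (fderiv ℝ a) := ha.fderiv_right (m := 1) (by norm_num)
  have hafddiff : ∀ y : Fin d → ℝ, DifferentiableAt ℝ (fderiv ℝ a) y := fun y =>
    (hafd.differentiable one_ne_zero).differentiableAt
  have hCa1 : ∀ y : Fin d → ℝ, ‖fderiv ℝ a y‖ ≤ Ca := by
    intro y; rw [← stmt6_norm1]; exact hCa 1 (by norm_num) y
  have hCa2 : ∀ y : Fin d → ℝ, ‖fderiv ℝ (fderiv ℝ a) y‖ ≤ Ca := by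
    intro y; rw [← stmt6_norm2]; exact hCa 2 le_rfl y
  rw [stmt6_norm2]
  have hc : DifferentiableAt ℝ (fun y : Fin d → ℝ => fderiv ℝ a (φ^[n] y)) x :=
    (hafddiff (φ^[n] x)).comp x (hdiff n x)
  have hrw : fderiv ℝ (a ∘ φ^[n])
      = fun y => ((fun z : Fin d → ℝ => fderiv ℝ a (φ^[n] z)) y).comp (fderiv ℝ (φ^[n]) y) := by
    funext y
    exact fderiv_comp y (hadiff (φ^[n] y)) (hdiff n y)
  have hprod : fderiv ℝ (fderiv ℝ (a ∘ φ^[n])) x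
      = (compL ℝ (Fin d → ℝ) (Fin d → ℝ) ℂ (fderiv ℝ a (φ^[n] x))).comp (fderiv ℝ (fderiv ℝ (φ^[n])) x)
        + ((compL ℝ (Fin d → ℝ) (Fin d → ℝ) ℂ).flip (fderiv ℝ (φ^[n]) x)).comp
            (fderiv ℝ (fun y : Fin d → ℝ => fderiv ℝ a (φ^[n] y)) x) := by
    rw [hrw]
    exact fderiv_clm_comp hc (hfddiff n x)
  have hcder : fderiv ℝ (fun y : Fin d → ℝ => fderiv ℝ a (φ^[n] y)) x
      = (fderiv ℝ (fderiv ℝ a) (φ^[n] x)).comp (fderiv ℝ (φ^[n]) x) :=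
    fderiv_comp x (hafddiff (φ^[n] x)) (hdiff n x)
  rw [hprod]
  refine le_trans (norm_add_le (E := (Fin d → ℝ) →L[ℝ] (Fin d → ℝ) →L[ℝ] ℂ) _ _) ?_
  have h1 : ‖(compL ℝ (Fin d → ℝ) (Fin d → ℝ) ℂ (fderiv ℝ a (φ^[n] x))).comp (fderiv ℝ (fderiv ℝ (φ^[n])) x)‖
      ≤ Ca * (K * Real.exp (2 * lam * n)) := by
    refine le_trans (opNorm_comp_le _ _) ?_
    exact mul_le_mul (le_trans (stmt6_compL_norm _) (hCa1 _)) (keyn n x)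
      (norm_nonneg _) hCa0
  have h2 : ‖((compL ℝ (Fin d → ℝ) (Fin d → ℝ) ℂ).flip (fderiv ℝ (φ^[n]) x)).comp
        (fderiv ℝ (fun y : Fin d → ℝ => fderiv ℝ a (φ^[n] y)) x)‖
      ≤ (C₀ * Real.exp (lam * n)) * (Ca * (C₀ * Real.exp (lam * n))) := by
    refine le_trans (opNorm_comp_le _ _) ?_
    refine mul_le_mul (le_trans (stmt6_flip_norm _) (hJac n x)) ?_ (norm_nonneg _)
      (by positivity)
    rw [hcder]
    refine le_trans (opNorm_comp_le _ _) ?_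
    exact mul_le_mul (hCa2 _) (hJac n x) (norm_nonneg _) hCa0
  refine le_trans (add_le_add h1 h2) ?_
  have e3 : Real.exp (lam * n) * Real.exp (lam * n) = Real.exp (2 * lam * n) := by
    rw [← Real.exp_add]; ring_nf
  have hv : (0:ℝ) < Real.exp (2 * lam * n) := Real.exp_pos _
  calc Ca * (K * Real.exp (2 * lam * n))
        + C₀ * Real.exp (lam * n) * (Ca * (C₀ * Real.exp (lam * n)))
      = (C₀ ^ 2 + K) * (Ca * Real.exp (2 * lam * n)) := by rw [← e3]; ring
    _ ≤ (C₀ ^ 2 + K + 1) * (Ca * Real.exp (2 * lam * n)) :=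
        mul_le_mul_of_nonneg_right (by linarith) (mul_nonneg hCa0 (le_of_lt hv))
    _ = (C₀ ^ 2 + K + 1) * Ca * Real.exp (2 * lam * n) := by ring
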